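/- The weakly continuous multi-valued functions are closed under composition: for all multi-valued functions f, g on Baire space, if f ≤_W \widehat{LLPO} and g ≤_W \widehat{LLPO}, then g ∘ f ≤_W \widehat{LLPO}, where ∘ denotes composition of multi-valued functions. -/

import Mathlib

/-- Baire space `ℕ^ℕ` with the product topology (`ℕ` discrete). -/
abbrev Baire : Type := ℕ → ℕ

/-- The pairing `⟨p,q⟩` on Baire space: `⟨p,q⟩(2n) = p(n)`, `⟨p,q⟩(2n+1) = q(n)`. -/
def bpair (p q : Baire) : Baire := fun n => if n % 2 = 0 then p (n / 2) else q (n / 2)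

/-- First projection `π₁`. -/
def proj1 (r : Baire) : Baire := fun n => r (2 * n)

/-- Second projection `π₂`. -/
def proj2 (r : Baire) : Baire := fun n => r (2 * n + 1)

/-- Multi-valued functions on Baire space. -/
abbrev MV : Type := Baire → Set Baire

/-- The domain of a multi-valued function. -/
def dom (f : MV) : Set Baire := {p | (f p).Nonempty}

/-- `F` is a realizer of `f`: `F p ∈ f p` for all `p` in the domain of `f`. -/
def Realizes (F : Baire → Baire) (f : MV) : Prop := ∀ p, (f p).Nonempty → F p ∈ f p

/-- Continuous Weihrauch reducibility `f ≤_W g`. -/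
def WRed (f g : MV) : Prop :=
  ∃ H K : Baire → Baire, Continuous H ∧ Continuous K ∧
    ∀ G : Baire → Baire, Realizes G g → Realizes (fun p => H (bpair p (G (K p)))) f

/-- Strong continuous Weihrauch reducibility `f ≤_sW g`. -/
def SWRed (f g : MV) : Prop :=
  ∃ H K : Baire → Baire, Continuous H ∧ Continuous K ∧
    ∀ G : Baire → Baire, Realizes G g → Realizes (fun p => H (G (K p))) f

/-- Continuous Weihrauch equivalence. -/
def WEquiv (f g : MV) : Prop := WRed f g ∧ WRed g f

/-- Strong continuous Weihrauch equivalence. -/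
def SWEquiv (f g : MV) : Prop := SWRed f g ∧ SWRed g f

/-- Composition of multi-valued functions: `(g ∘ f)(x) = {z | ∃ y ∈ f(x), z ∈ g(y)}`
if `x ∈ dom(f)` and `f(x) ⊆ dom(g)`, and `∅` otherwise. -/
def mComp (g f : MV) : MV := fun x =>
  {z | (f x).Nonempty ∧ (∀ y ∈ f x, (g y).Nonempty) ∧ ∃ y ∈ f x, z ∈ g y}

/-- The parallelized lesser limited principle of omniscience. -/
def parLLPO : MV := fun p =>
  {q | ∀ k, (q k = 0 ∧ ∀ n, p (Nat.pair k (2 * n)) = 0) ∨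
            (q k = 1 ∧ ∀ n, p (Nat.pair k (2 * n + 1)) = 0)}

/-!
Instances of `parLLPO` and continuous families of infinite binary trees are interchangeable, both
being forms of weak Kőnig's lemma. An instance `q` yields the tree of bit strings that never keep a
column refuted strictly earlier than its rival; this tree is infinite, and its paths answer `q`
whenever `q` has an answer. Conversely, a family of trees yields the instance whose questions ask,
at every node, which child dies first ("death race"); following the answers from the root gives an
infinite path. For the composite, the two stages are merged into one tree: the first-stage bits sit
at even positions and the second-stage bits at odd ones, a second-stage node being kept as long as
some continuation of the first-stage node allows it. Compactness of Cantor space makes this a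
continuous family again, and its paths answer both stages.
-/

open Filter Topology

theorem proj1_bpair (p q : Baire) : proj1 (bpair p q) = p := by
  funext n
  simp [proj1, bpair]

theorem proj2_bpair (p q : Baire) : proj2 (bpair p q) = q := by
  funext n
  simp [proj2, bpair, Nat.add_mod, Nat.add_div]

theorem continuous_proj1 : Continuous proj1 :=
  continuous_pi fun n => continuous_apply (2 * n)

theorem continuous_proj2 : Continuous proj2 :=
  continuous_pi fun n => continuous_apply (2 * n + 1)

theorem Continuous.bpair {X : Type*} [TopologicalSpace X] {f g : X → Baire}
    (hf : Continuous f) (hg : Continuous g) : Continuous fun x => bpair (f x) (g x) := by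
  refine continuous_pi fun n => ?_
  by_cases hn : n % 2 = 0
  · simp only [_root_.bpair, hn, if_true]
    exact (continuous_apply _).comp hf
  · simp only [_root_.bpair, hn, if_false]
    exact (continuous_apply _).comp hg

/-- Every admissible answer `a` to `g (K p)` is the value at `K p` of some realizer of `g`. -/
theorem mem_of_reduction {f g : MV} {H K : Baire → Baire}
    (hR : ∀ G : Baire → Baire, Realizes G g → Realizes (fun p => H (bpair p (G (K p)))) f)
    {p a : Baire} (hp : (f p).Nonempty) (ha : (g (K p)).Nonempty → a ∈ g (K p)) :
    H (bpair p a) ∈ f p := by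
  classical
  have hG : Realizes (Function.update (fun q => Classical.epsilon (· ∈ g q)) (K p) a) g := by
    intro q hq
    rcases eq_or_ne q (K p) with rfl | hne
    · simpa using ha hq
    · simpa [Function.update_of_ne hne] using Classical.epsilon_spec hq
  simpa using hR _ hG p hp

theorem mem_parLLPO_iff {p q : Baire} :
    q ∈ parLLPO p ↔
      ∀ k, ∃ b : Bool, q k = b.toNat ∧ ∀ n, p (Nat.pair k (2 * n + b.toNat)) = 0 := by
  simp [parLLPO]

theorem parLLPO_nonempty_iff {p : Baire} :
    (parLLPO p).Nonempty ↔ ∀ k, ∃ b : Bool, ∀ n, p (Nat.pair k (2 * n + b.toNat)) = 0 := by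
  refine ⟨fun ⟨q, hq⟩ k => ?_, fun h => ?_⟩
  · obtain ⟨b, -, hb⟩ := mem_parLLPO_iff.1 hq k
    exact ⟨b, hb⟩
  · choose b hb using h
    exact ⟨fun k => (b k).toNat, mem_parLLPO_iff.2 fun k => ⟨b k, rfl, hb k⟩⟩

theorem Bool.exists_forall_imp_not_of_monotone {R : Bool → ℕ → Prop}
    (hR : ∀ b, Monotone (R b)) : ∃ b, ∀ d, R b d → R (!b) d := by
  by_contra! h
  obtain ⟨⟨d₀, h₀, h₀'⟩, ⟨d₁, h₁, h₁'⟩⟩ := And.intro (h false) (h true)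
  rcases le_total d₀ d₁ with hd | hd
  · exact h₁' (hR false hd h₀)
  · exact h₀' (hR true hd h₁)

theorem isClopen_setOf_of_cylinder {α : Type*} [TopologicalSpace α] [DiscreteTopology α]
    {P : (ℕ → α) → Prop} (N : ℕ) (h : ∀ x, ∀ y ∈ PiNat.cylinder x N, P x → P y) :
    IsClopen {x | P x} := by
  have hsymm : ∀ x y : ℕ → α, y ∈ PiNat.cylinder x N → x ∈ PiNat.cylinder y N :=
    fun x y hy i hi => (hy i hi).symm
  have isOpen_of : ∀ Q : (ℕ → α) → Prop, (∀ x, ∀ y ∈ PiNat.cylinder x N, Q x → Q y) →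
      IsOpen {x | Q x} := fun Q hQ => isOpen_iff_forall_mem_open.2 fun x hx =>
    ⟨_, fun y hy => hQ x y hy hx, PiNat.isOpen_cylinder _ x N, fun _ _ => rfl⟩
  refine ⟨isOpen_compl_iff.1 (isOpen_of (¬P ·) fun x y hy hx hPy => ?_), isOpen_of P h⟩
  exact hx (h y x (hsymm x y hy) hPy)

theorem IsClopen.image_fst {X Y : Type*} [TopologicalSpace X] [TopologicalSpace Y]
    [CompactSpace Y] {S : Set (X × Y)} (hS : IsClopen S) : IsClopen (Prod.fst '' S) :=
  ⟨isClosedMap_fst_of_compactSpace S hS.isClosed, isOpenMap_fst S hS.isOpen⟩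

theorem isClopen_cylinder {α : Type*} [TopologicalSpace α] [DiscreteTopology α] (x : ℕ → α)
    (n : ℕ) : IsClopen (PiNat.cylinder x n) :=
  isClopen_setOf_of_cylinder n fun _ _ hy hx i hi => (hy i hi).trans (hx i hi)

section Sequences

variable {α : Type*}

def initSeg (x : ℕ → α) (n : ℕ) : List α := (List.range n).map x

@[simp]
theorem length_initSeg (x : ℕ → α) (n : ℕ) : (initSeg x n).length = n := by
  simp [initSeg]

theorem initSeg_succ (x : ℕ → α) (n : ℕ) : initSeg x (n + 1) = initSeg x n ++ [x n] := by
  simp [initSeg, List.range_succ]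

theorem getD_initSeg (x : ℕ → α) {i n : ℕ} (h : i < n) (d : α) :
    (initSeg x n).getD i d = x i := by
  simp [initSeg, h]

theorem initSeg_congr {x y : ℕ → α} {n : ℕ} (h : y ∈ PiNat.cylinder x n) :
    initSeg x n = initSeg y n :=
  List.map_congr_left fun i hi => (h i (List.mem_range.1 hi)).symm

theorem initSeg_prefix (x : ℕ → α) {m n : ℕ} (h : m ≤ n) : initSeg x m <+: initSeg x n := by
  rw [initSeg, initSeg, ← Nat.min_eq_left h, ← List.take_range, List.map_take]
  exact List.take_prefix _ _

theorem List.IsPrefix.getD_eq {u v : List α} (h : u <+: v) {i : ℕ} (hi : i < u.length) (d : α) :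
    u.getD i d = v.getD i d := by
  rw [List.getD_eq_getElem _ _ hi, List.getD_eq_getElem _ _ (hi.trans_le h.length_le),
    h.getElem]

def evens (x : ℕ → α) : ℕ → α := fun i => x (2 * i)

def odds (x : ℕ → α) : ℕ → α := fun i => x (2 * i + 1)

def interleave (s u : ℕ → α) : ℕ → α := fun i => if i % 2 = 0 then s (i / 2) else u (i / 2)

theorem evens_interleave (s u : ℕ → α) : evens (interleave s u) = s := by
  funext i
  simp [evens, interleave]

theorem odds_interleave (s u : ℕ → α) : odds (interleave s u) = u := by
  funext i
  simp [odds, interleave, Nat.add_mod, Nat.add_div]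

theorem continuous_evens [TopologicalSpace α] : Continuous (evens : (ℕ → α) → ℕ → α) :=
  continuous_pi fun i => continuous_apply (2 * i)

theorem continuous_odds [TopologicalSpace α] : Continuous (odds : (ℕ → α) → ℕ → α) :=
  continuous_pi fun i => continuous_apply (2 * i + 1)

end Sequences

def IsPrefixClosed (T : List Bool → Prop) : Prop := ∀ ⦃u v : List Bool⦄, u <+: v → T v → T u

def IsPath (T : List Bool → Prop) (x : ℕ → Bool) : Prop := ∀ n, T (initSeg x n)

section DeathRace

variable {T : List Bool → Prop}

def Survives (T : List Bool → Prop) (m : ℕ) (w : List Bool) : Prop :=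
  ∃ v : List Bool, v.length = m ∧ T (w ++ v)

theorem survives_zero {w : List Bool} : Survives T 0 w ↔ T w := by
  simp [Survives]

theorem survives_succ {m : ℕ} {w : List Bool} :
    Survives T (m + 1) w ↔ ∃ b, Survives T m (w ++ [b]) := by
  constructor
  · rintro ⟨_ | ⟨b, v⟩, hv, hT⟩
    · simp at hv
    · exact ⟨b, v, by simpa using hv, by simpa using hT⟩
  · rintro ⟨b, v, hv, hT⟩
    exact ⟨b :: v, by simp [hv], by simpa using hT⟩

theorem Survives.anti (hT : IsPrefixClosed T) {m m' : ℕ} {w : List Bool} (h : m ≤ m')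
    (hs : Survives T m' w) : Survives T m w := by
  obtain ⟨v, rfl, hv⟩ := hs
  exact ⟨v.take m, by simp [h],
    hT ((List.prefix_append_right_inj w).2 (List.take_prefix m v)) hv⟩

theorem IsPath.survives_nil {x : ℕ → Bool} (hx : IsPath T x) (m : ℕ) : Survives T m [] :=
  ⟨initSeg x m, length_initSeg x m, hx m⟩

def LosesRace (T : List Bool → Prop) (w : List Bool) (b : Bool) (m : ℕ) : Prop :=
  ¬ Survives T m (w ++ [b]) ∧ Survives T m (w ++ [!b])

open Classical in
/-- The entry at `⟨encode w, 2 m + b⟩` is `1` iff the child `w ++ [b]` loses the race to depth `m`.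
An answer thus picks, at every node, a child that survives at least as long as its sibling. -/
noncomputable def deathRace (T : List Bool → Prop) : Baire := fun n =>
  match (Encodable.decode n.unpair.1 : Option (List Bool)) with
  | none => 0
  | some w => if LosesRace T w (n.unpair.2 % 2 = 1) (n.unpair.2 / 2) then 1 else 0

theorem deathRace_pair_eq_zero_iff {k : ℕ} {w : List Bool} (hk : Encodable.decode k = some w)
    (b : Bool) (m : ℕ) :
    deathRace T (Nat.pair k (2 * m + b.toNat)) = 0 ↔ ¬ LosesRace T w b m := by
  cases b <;> simp [deathRace, hk, Nat.add_mod, Nat.add_div]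

theorem parLLPO_deathRace_nonempty (hT : IsPrefixClosed T) :
    (parLLPO (deathRace T)).Nonempty := by
  refine parLLPO_nonempty_iff.2 fun k => ?_
  rcases hk : (Encodable.decode k : Option (List Bool)) with _ | w
  · exact ⟨false, fun n => by simp [deathRace, hk]⟩
  obtain ⟨b, hb⟩ := Bool.exists_forall_imp_not_of_monotone
    (R := fun b m => ¬ Survives T m (w ++ [b])) fun b m m' h hm hs => hm (hs.anti hT h)
  exact ⟨b, fun m => (deathRace_pair_eq_zero_iff hk b m).2 fun hlose => hb m hlose.1 hlose.2⟩

def branch (c : Baire) : ℕ → List Bool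
  | 0 => []
  | n + 1 => branch c n ++ [decide (c (Encodable.encode (branch c n)) = 1)]

def branchSeq (c : Baire) (n : ℕ) : Bool := decide (c (Encodable.encode (branch c n)) = 1)

theorem branch_eq_initSeg (c : Baire) (n : ℕ) : branch c n = initSeg (branchSeq c) n := by
  induction n with
  | zero => rfl
  | succ n ih => rw [initSeg_succ, ← ih, branch, branchSeq]

theorem survives_branch (hroot : ∀ m, Survives T m [])
    {c : Baire} (hc : c ∈ parLLPO (deathRace T)) (n m : ℕ) : Survives T m (branch c n) := by
  induction n generalizing m with
  | zero => exact hroot m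
  | succ n ih =>
    obtain ⟨b, hcb, hcol⟩ := mem_parLLPO_iff.1 hc (Encodable.encode (branch c n))
    have hbit : decide (c (Encodable.encode (branch c n)) = 1) = b := by cases b <;> simp [hcb]
    have hwin : ¬ LosesRace T (branch c n) b m :=
      (deathRace_pair_eq_zero_iff (Encodable.encodek _) b m).1 (hcol m)
    obtain ⟨b', hb'⟩ := survives_succ.1 (ih (m + 1))
    rw [branch, hbit]
    by_contra hdead
    exact hwin ⟨hdead, by cases b <;> cases b' <;> simp_all⟩

theorem isPath_branchSeq {x : ℕ → Bool} (hx : IsPath T x) {c : Baire}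
    (hc : c ∈ parLLPO (deathRace T)) : IsPath T (branchSeq c) := fun n => by
  rw [← branch_eq_initSeg]
  exact survives_zero.1 (survives_branch hx.survives_nil hc n 0)

end DeathRace

theorem isLocallyConstant_branch (n : ℕ) : IsLocallyConstant fun c => branch c n := by
  induction n with
  | zero => exact IsLocallyConstant.const _
  | succ n ih =>
    rw [IsLocallyConstant.iff_eventually_eq] at ih ⊢
    intro c
    have hk : ∀ᶠ c' in 𝓝 c,
        c' (Encodable.encode (branch c n)) = c (Encodable.encode (branch c n)) := by
      simpa only [nhds_discrete ℕ, tendsto_pure] using (continuous_apply _).tendsto c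
    filter_upwards [ih c, hk] with c' hbranch hck
    simp only [branch, hbranch, hck]

theorem continuous_branchSeq : Continuous branchSeq :=
  continuous_pi fun n => by
    have : (fun c => branchSeq c n) = fun c => (branch c (n + 1)).getD n false := by
      funext c
      rw [branch_eq_initSeg, getD_initSeg _ n.lt_succ_self]
    rw [this]
    exact ((isLocallyConstant_branch (n + 1)).comp fun w => w.getD n false).continuous

theorem isClopen_setOf_survives {T : Baire → List Bool → Prop} (hT : ∀ w, IsClopen {p | T p w})
    (m : ℕ) (w : List Bool) : IsClopen {p | Survives (T p) m w} := by
  have : {p | Survives (T p) m w} = ⋃ v ∈ {v : List Bool | v.length = m}, {p | T p (w ++ v)} := by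
    ext p
    simp [Survives]
  rw [this]
  exact (List.finite_length_eq Bool m).isClopen_biUnion fun v _ => hT _

open Classical in
theorem continuous_deathRace {T : Baire → List Bool → Prop} (hT : ∀ w, IsClopen {p | T p w}) :
    Continuous fun p => deathRace (T p) := by
  refine continuous_pi fun n => ?_
  rcases hn : (Encodable.decode n.unpair.1 : Option (List Bool)) with _ | w
  · simp only [deathRace, hn]
    exact continuous_const
  · have hS : IsClopen {p | LosesRace (T p) w (n.unpair.2 % 2 = 1) (n.unpair.2 / 2)} :=
      (isClopen_setOf_survives hT _ _).compl.inter (isClopen_setOf_survives hT _ _)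
    simp only [deathRace, hn]
    exact continuous_const.if (by simp [isClopen_iff_frontier_eq_empty.1 hS]) continuous_const

structure IsTreeFamily (T : Baire → List Bool → Prop) : Prop where
  isPrefixClosed : ∀ p, IsPrefixClosed (T p)
  isClopen : ∀ w, IsClopen {p | T p w}
  exists_isPath : ∀ p, ∃ x, IsPath (T p) x

/-- `f ≤_W WKL`, an instance of weak Kőnig's lemma being a continuous family of infinite binary
trees. -/
def WKLReducible (f : MV) : Prop :=
  ∃ (T : Baire → List Bool → Prop) (H : Baire → (ℕ → Bool) → Baire),
    IsTreeFamily T ∧ Continuous (Function.uncurry H) ∧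
      ∀ p, (f p).Nonempty → ∀ x, IsPath (T p) x → H p x ∈ f p

theorem WKLReducible.wRed_parLLPO {f : MV} (hf : WKLReducible f) : WRed f parLLPO := by
  obtain ⟨T, H, hT, hH, hTH⟩ := hf
  refine ⟨fun r => H (proj1 r) (branchSeq (proj2 r)), fun p => deathRace (T p),
    hH.comp (continuous_proj1.prodMk (continuous_branchSeq.comp continuous_proj2)),
    continuous_deathRace hT.isClopen, fun G hG p hp => ?_⟩
  obtain ⟨x, hx⟩ := hT.exists_isPath p
  have hc := hG _ (parLLPO_deathRace_nonempty (hT.isPrefixClosed p))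
  simpa only [proj1_bpair, proj2_bpair] using hTH p hp _ (isPath_branchSeq hx hc)

section LLPOTree

def Refuted (q : Baire) (k : ℕ) (b : Bool) (d : ℕ) : Prop :=
  ∃ n < d, q (Nat.pair k (2 * n + b.toNat)) ≠ 0

theorem refuted_mono (q : Baire) (k : ℕ) (b : Bool) : Monotone (Refuted q k b) :=
  fun _ _ h ⟨n, hn, hq⟩ => ⟨n, hn.trans_le h, hq⟩

/-- Bit `k` of a node chooses a column of the `k`-th instance. The node is cut off as soon as, at a
stage not exceeding its length, its column is refuted while the other one is not yet; a column
refuted no later than its rival is always avoidable, so the tree is infinite even when `q` has no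
solution. -/
def llpoTree (q : Baire) (w : List Bool) : Prop :=
  ∀ k < w.length, ∀ d ≤ w.length,
    Refuted q k (w.getD k false) d → Refuted q k (!w.getD k false) d

theorem isPrefixClosed_llpoTree (q : Baire) : IsPrefixClosed (llpoTree q) :=
  fun _ _ huv hv k hk d hd => by
    rw [huv.getD_eq hk]
    exact hv k (hk.trans_le huv.length_le) d (hd.trans huv.length_le)

theorem isClopen_setOf_llpoTree (w : List Bool) : IsClopen {q | llpoTree q w} := by
  refine isClopen_setOf_of_cylinder (Nat.pair w.length (2 * w.length + 2))
    fun q q' hq' hw k hk d hd => ?_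
  have hcongr : ∀ b, Refuted q k b d ↔ Refuted q' k b d := fun b =>
    exists_congr fun n => and_congr_right fun hn => by
      rw [hq' _ ((Nat.pair_lt_pair_left _ hk).trans
        (Nat.pair_lt_pair_right _ (by cases b <;> simp <;> omega)))]
  rw [← hcongr, ← hcongr]
  exact hw k hk d hd

theorem exists_isPath_llpoTree (q : Baire) : ∃ x, IsPath (llpoTree q) x := by
  choose x hx using fun k => Bool.exists_forall_imp_not_of_monotone (refuted_mono q k)
  refine ⟨x, fun n k hk d _ => ?_⟩
  rw [getD_initSeg x (by simpa using hk)]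
  exact hx k d

theorem IsPath.toNat_mem_parLLPO {q : Baire} {x : ℕ → Bool} (hx : IsPath (llpoTree q) x)
    (hq : (parLLPO q).Nonempty) : (fun k => (x k).toNat) ∈ parLLPO q := by
  refine mem_parLLPO_iff.2 fun k => ⟨x k, rfl, fun n => ?_⟩
  by_contra hne
  obtain ⟨m, -, hm⟩ : Refuted q k (!x k) (n + 1) := by
    have := hx (max (k + 1) (n + 1)) k (by simp) (n + 1) (by simp)
    rw [getD_initSeg _ (by simp)] at this
    exact this ⟨n, n.lt_succ_self, hne⟩
  obtain ⟨b, hb⟩ := parLLPO_nonempty_iff.1 hq k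
  cases b <;> cases hxk : x k <;> simp_all

theorem isTreeFamily_llpoTree {K : Baire → Baire} (hK : Continuous K) :
    IsTreeFamily fun p => llpoTree (K p) :=
  ⟨fun p => isPrefixClosed_llpoTree (K p), fun w => (isClopen_setOf_llpoTree w).preimage hK,
    fun p => exists_isPath_llpoTree (K p)⟩

theorem WRed.wklReducible {f : MV} (hf : WRed f parLLPO) : WKLReducible f := by
  obtain ⟨H, K, hH, hK, hR⟩ := hf
  refine ⟨fun p => llpoTree (K p), fun p x => H (bpair p fun k => (x k).toNat),
    isTreeFamily_llpoTree hK, ?_, fun p hp x hx => mem_of_reduction hR hp hx.toNat_mem_parLLPO⟩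
  exact hH.comp (continuous_fst.bpair (continuous_pi fun k =>
    (continuous_of_discreteTopology (f := Bool.toNat)).comp
      ((continuous_apply k).comp continuous_snd)))

end LLPOTree

section Composition

variable {T₁ T₂ : Baire → List Bool → Prop} {φ : Baire → (ℕ → Bool) → Baire} {p : Baire}

/-- Quantifying over all continuations `s` of the first-stage node, rather than waiting for the
actual one, keeps membership clopen in `p` since Cantor space is compact. -/
def CompNode (T₁ T₂ : Baire → List Bool → Prop) (φ : Baire → (ℕ → Bool) → Baire) (p : Baire)
    (x : ℕ → Bool) (n : ℕ) : Prop :=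
  T₁ p (initSeg (evens x) ((n + 1) / 2)) ∧
    ∃ s ∈ PiNat.cylinder (evens x) ((n + 1) / 2),
      T₂ (φ p s) (initSeg (odds x) (n / 2))

theorem CompNode.of_cylinder {x y : ℕ → Bool} {n : ℕ} (h : y ∈ PiNat.cylinder x n)
    (hx : CompNode T₁ T₂ φ p x n) : CompNode T₁ T₂ φ p y n := by
  obtain ⟨h₁, s, hs, h₂⟩ := hx
  have heven : evens y ∈ PiNat.cylinder (evens x) ((n + 1) / 2) := fun i hi =>
    h (2 * i) (by omega)
  have hodd : odds y ∈ PiNat.cylinder (odds x) (n / 2) := fun i hi =>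
    h (2 * i + 1) (by omega)
  exact ⟨initSeg_congr heven ▸ h₁, s, fun i hi => (hs i hi).trans (heven i hi).symm,
    initSeg_congr hodd ▸ h₂⟩

theorem CompNode.anti (hT₁ : ∀ p, IsPrefixClosed (T₁ p)) (hT₂ : ∀ q, IsPrefixClosed (T₂ q))
    {x : ℕ → Bool} {m n : ℕ} (h : m ≤ n) (hx : CompNode T₁ T₂ φ p x n) :
    CompNode T₁ T₂ φ p x m := by
  obtain ⟨h₁, s, hs, h₂⟩ := hx
  exact ⟨hT₁ p (initSeg_prefix _ (by omega)) h₁, s, PiNat.cylinder_anti _ (by omega) hs,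
    hT₂ _ (initSeg_prefix _ (by omega)) h₂⟩

def compTree (T₁ T₂ : Baire → List Bool → Prop) (φ : Baire → (ℕ → Bool) → Baire) (p : Baire)
    (w : List Bool) : Prop :=
  CompNode T₁ T₂ φ p (fun i => w.getD i false) w.length

theorem compTree_initSeg {x : ℕ → Bool} {n : ℕ} :
    compTree T₁ T₂ φ p (initSeg x n) ↔ CompNode T₁ T₂ φ p x n := by
  rw [compTree, length_initSeg]
  exact ⟨CompNode.of_cylinder fun i hi => (getD_initSeg x hi false).symm,
    CompNode.of_cylinder fun i hi => getD_initSeg x hi false⟩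

theorem isPrefixClosed_compTree (hT₁ : ∀ p, IsPrefixClosed (T₁ p))
    (hT₂ : ∀ q, IsPrefixClosed (T₂ q)) : IsPrefixClosed (compTree T₁ T₂ φ p) :=
  fun _ _ huv hv => (hv.anti hT₁ hT₂ huv.length_le).of_cylinder fun _ hi => huv.getD_eq hi false

theorem isClopen_setOf_compTree (hT₁ : ∀ w, IsClopen {p | T₁ p w})
    (hT₂ : ∀ w, IsClopen {q | T₂ q w}) (hφ : Continuous (Function.uncurry φ)) (w : List Bool) :
    IsClopen {p | compTree T₁ T₂ φ p w} := by
  set e : ℕ → Bool := evens fun i => w.getD i false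
  set L := (w.length + 1) / 2
  set v := initSeg (odds fun i => w.getD i false) (w.length / 2)
  set S := {ps : Baire × (ℕ → Bool) | ps.2 ∈ PiNat.cylinder e L ∧ T₂ (φ ps.1 ps.2) v}
  have hS : IsClopen S :=
    ((isClopen_cylinder e L).preimage continuous_snd).inter ((hT₂ v).preimage hφ)
  have heq : {p | compTree T₁ T₂ φ p w} = {p | T₁ p (initSeg e L)} ∩ Prod.fst '' S := by
    ext p
    simp [compTree, CompNode, e, L, v, S]
  rw [heq]
  exact (hT₁ _).inter hS.image_fst

theorem IsPath.evens_of_compTree {x : ℕ → Bool} (hx : IsPath (compTree T₁ T₂ φ p) x) :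
    IsPath (T₁ p) (evens x) := fun n => by
  simpa [show (2 * n + 1) / 2 = n by omega] using (compTree_initSeg.1 (hx (2 * n))).1

/-- The witnesses `s N` of the nodes of length `2 N` converge to `evens x`, and the condition they
satisfy is closed. -/
theorem IsPath.odds_of_compTree (hT₂ : ∀ q, IsPrefixClosed (T₂ q))
    (hT₂' : ∀ w, IsClopen {q | T₂ q w}) (hφ : Continuous (φ p)) {x : ℕ → Bool}
    (hx : IsPath (compTree T₁ T₂ φ p) x) :
    IsPath (T₂ (φ p (evens x))) (odds x) := by
  intro n
  have hnode : ∀ N, ∃ s ∈ PiNat.cylinder (evens x) N,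
      T₂ (φ p s) (initSeg (odds x) N) := fun N => by
    simpa [show (2 * N + 1) / 2 = N by omega] using (compTree_initSeg.1 (hx (2 * N))).2
  choose s hs hsT using hnode
  have hlim : Tendsto s atTop (𝓝 (evens x)) :=
    tendsto_pi_nhds.2 fun i => tendsto_const_nhds.congr'
      ((eventually_gt_atTop i).mono fun N hN => (hs N i hN).symm)
  exact ((hT₂' _).isClosed.preimage hφ).mem_of_tendsto hlim
    ((eventually_ge_atTop n).mono fun N hN => hT₂ _ (initSeg_prefix _ hN) (hsT N))

theorem exists_isPath_compTree (hT₁ : ∃ s, IsPath (T₁ p) s)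
    (hT₂ : ∀ s, ∃ u, IsPath (T₂ (φ p s)) u) : ∃ x, IsPath (compTree T₁ T₂ φ p) x := by
  obtain ⟨s, hs⟩ := hT₁
  obtain ⟨u, hu⟩ := hT₂ s
  refine ⟨interleave s u, fun n => compTree_initSeg.2 ?_⟩
  rw [CompNode, evens_interleave, odds_interleave]
  exact ⟨hs _, s, fun _ _ => rfl, hu _⟩

theorem IsTreeFamily.compTree (hT₁ : IsTreeFamily T₁) (hT₂ : IsTreeFamily T₂)
    (hφ : Continuous (Function.uncurry φ)) : IsTreeFamily (compTree T₁ T₂ φ) :=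
  ⟨fun _ => isPrefixClosed_compTree hT₁.isPrefixClosed hT₂.isPrefixClosed,
    isClopen_setOf_compTree hT₁.isClopen hT₂.isClopen hφ,
    fun p => exists_isPath_compTree (hT₁.exists_isPath p) fun _ => hT₂.exists_isPath _⟩

theorem WKLReducible.mComp {f g : MV} (hf : WKLReducible f) (hg : WKLReducible g) :
    WKLReducible (mComp g f) := by
  obtain ⟨T₁, H₁, hT₁, hH₁, hf⟩ := hf
  obtain ⟨T₂, H₂, hT₂, hH₂, hg⟩ := hg
  refine ⟨compTree T₁ T₂ H₁, fun p x => H₂ (H₁ p (evens x)) (odds x),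
    hT₁.compTree hT₂ hH₁, ?_, fun p ⟨_, hp, hdom, _⟩ x hx => ?_⟩
  · exact hH₂.comp ((hH₁.comp (continuous_fst.prodMk (continuous_evens.comp
      continuous_snd))).prodMk (continuous_odds.comp continuous_snd))
  have hy := hf p hp _ hx.evens_of_compTree
  exact ⟨hp, hdom, _, hy, hg _ (hdom _ hy) _ (hx.odds_of_compTree hT₂.isPrefixClosed hT₂.isClopen
    (hH₁.comp (Continuous.prodMk_right (X := Baire) p)))⟩

end Composition

/-- Weakly continuous multi-valued functions are closed under composition. -/
theorem weakly_continuous_closed_under_composition (f g : MV)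
    (hf : WRed f parLLPO) (hg : WRed g parLLPO) : WRed (mComp g f) parLLPO := by
  exact (hf.wklReducible.mComp hg.wklReducible).wRed_parLLPO
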